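/- Let n ≥ 16 and let D be a set of binary words of length n such that the Hamming distance between any two distinct words of D is exactly 4 (an equidistant binary code with distance 4). Then |D| ≤ n/2. -/
import Mathlib

open Finset

namespace EquidistFour

variable {α : Type*} [DecidableEq α]

private lemma card_union4 {a b c d : Finset α}
    (hab : Disjoint a b) (hac : Disjoint a c) (had : Disjoint a d)
    (hbc : Disjoint b c) (hbd : Disjoint b d) (hcd : Disjoint c d) :
    (a ∪ b ∪ c ∪ d).card = a.card + b.card + c.card + d.card := by
  rw [card_union_of_disjoint (by simp [disjoint_union_left, *]),
      card_union_of_disjoint (by simp [disjoint_union_left, *]),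
      card_union_of_disjoint hab]

private lemma card_union5 {a b c d e : Finset α}
    (hab : Disjoint a b) (hac : Disjoint a c) (had : Disjoint a d) (hae : Disjoint a e)
    (hbc : Disjoint b c) (hbd : Disjoint b d) (hbe : Disjoint b e)
    (hcd : Disjoint c d) (hce : Disjoint c e) (hde : Disjoint d e) :
    (a ∪ b ∪ c ∪ d ∪ e).card = a.card + b.card + c.card + d.card + e.card := by
  rw [card_union_of_disjoint (by simp [disjoint_union_left, *]),
      card_union4 hab hac had hbc hbd hcd]

private lemma sdiff_disj {P S T : Finset α} (hST : S ∩ T = P) :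
    Disjoint (S \ P) (T \ P) := by
  rw [disjoint_left]
  intro a ha hb
  rw [mem_sdiff] at ha hb
  have : a ∈ S ∩ T := mem_inter.mpr ⟨ha.1, hb.1⟩
  rw [hST] at this
  exact ha.2 this

private lemma inter_decomp {P S C : Finset α} (hPS : P ⊆ S) :
    C ∩ S = (C ∩ P) ∪ (C ∩ (S \ P)) := by
  rw [← inter_union_distrib_left, union_sdiff_of_subset hPS]

private lemma capP_le_one {P C : Finset α} (hP : P.card = 2) (hPC : ¬ P ⊆ C) :
    (C ∩ P).card ≤ 1 := by
  by_contra h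
  push_neg at h
  have hsub : C ∩ P ⊆ P := inter_subset_right
  have hle : P.card ≤ (C ∩ P).card := by omega
  have heq := eq_of_subset_of_card_le hsub hle
  exact hPC (heq ▸ inter_subset_left)

private lemma inter_decomp_card {P S C : Finset α} (hPS : P ⊆ S) (hc : (C ∩ S).card = 2) :
    (C ∩ P).card + (C ∩ (S \ P)).card = 2 := by
  rw [← hc, inter_decomp hPS]
  rw [card_union_of_disjoint]
  exact Disjoint.mono inter_subset_right inter_subset_right disjoint_sdiff

private lemma structC {P S₁ S₂ S₃ C : Finset α}
    (hP : P.card = 2) (hC4 : C.card = 4)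
    (hPS₁ : P ⊆ S₁) (hPS₂ : P ⊆ S₂) (hPS₃ : P ⊆ S₃)
    (h12 : S₁ ∩ S₂ = P) (h13 : S₁ ∩ S₃ = P) (h23 : S₂ ∩ S₃ = P)
    (hc1 : (C ∩ S₁).card = 2) (hc2 : (C ∩ S₂).card = 2) (hc3 : (C ∩ S₃).card = 2)
    (hPC : ¬ P ⊆ C) :
    (C ∩ P).card = 1 ∧ (C ∩ (S₁ \ P)).card = 1 ∧ (C ∩ (S₂ \ P)).card = 1 ∧
      (C ∩ (S₃ \ P)).card = 1 ∧
      C = (C ∩ P) ∪ (C ∩ (S₁ \ P)) ∪ (C ∩ (S₂ \ P)) ∪ (C ∩ (S₃ \ P)) := by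
  have hcP := capP_le_one hP hPC
  have e1 := inter_decomp_card hPS₁ hc1
  have e2 := inter_decomp_card hPS₂ hc2
  have e3 := inter_decomp_card hPS₃ hc3
  have dP1 : Disjoint (C ∩ P) (C ∩ (S₁ \ P)) :=
    Disjoint.mono inter_subset_right inter_subset_right disjoint_sdiff
  have dP2 : Disjoint (C ∩ P) (C ∩ (S₂ \ P)) :=
    Disjoint.mono inter_subset_right inter_subset_right disjoint_sdiff
  have dP3 : Disjoint (C ∩ P) (C ∩ (S₃ \ P)) :=
    Disjoint.mono inter_subset_right inter_subset_right disjoint_sdiff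
  have d12 : Disjoint (C ∩ (S₁ \ P)) (C ∩ (S₂ \ P)) :=
    Disjoint.mono inter_subset_right inter_subset_right (sdiff_disj h12)
  have d13 : Disjoint (C ∩ (S₁ \ P)) (C ∩ (S₃ \ P)) :=
    Disjoint.mono inter_subset_right inter_subset_right (sdiff_disj h13)
  have d23 : Disjoint (C ∩ (S₂ \ P)) (C ∩ (S₃ \ P)) :=
    Disjoint.mono inter_subset_right inter_subset_right (sdiff_disj h23)
  have hU : (C ∩ P) ∪ (C ∩ (S₁ \ P)) ∪ (C ∩ (S₂ \ P)) ∪ (C ∩ (S₃ \ P)) ⊆ C := by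
    refine union_subset (union_subset (union_subset ?_ ?_) ?_) ?_ <;> exact inter_subset_left
  have hUcard := card_union4 (α := α) dP1 dP2 dP3 d12 d13 d23
  have hle := card_le_card hU
  rw [hUcard, hC4] at hle
  have h1 : (C ∩ P).card = 1 := by omega
  refine ⟨h1, by omega, by omega, by omega, ?_⟩
  refine (eq_of_subset_of_card_le hU ?_).symm
  rw [hUcard, hC4]; omega

private lemma no_bad_four {P S₁ S₂ S₃ S₄ C : Finset α}
    (hP : P.card = 2) (hC4 : C.card = 4)
    (hPS₁ : P ⊆ S₁) (hPS₂ : P ⊆ S₂) (hPS₃ : P ⊆ S₃) (hPS₄ : P ⊆ S₄)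
    (h12 : S₁ ∩ S₂ = P) (h13 : S₁ ∩ S₃ = P) (h14 : S₁ ∩ S₄ = P)
    (h23 : S₂ ∩ S₃ = P) (h24 : S₂ ∩ S₄ = P) (h34 : S₃ ∩ S₄ = P)
    (hc1 : (C ∩ S₁).card = 2) (hc2 : (C ∩ S₂).card = 2) (hc3 : (C ∩ S₃).card = 2)
    (hc4 : (C ∩ S₄).card = 2)
    (hPC : ¬ P ⊆ C) : False := by
  have hcP := capP_le_one hP hPC
  have e1 := inter_decomp_card hPS₁ hc1
  have e2 := inter_decomp_card hPS₂ hc2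
  have e3 := inter_decomp_card hPS₃ hc3
  have e4 := inter_decomp_card hPS₄ hc4
  have dd : ∀ {S T : Finset α}, S ∩ T = P → Disjoint (C ∩ (S \ P)) (C ∩ (T \ P)) :=
    fun h => Disjoint.mono inter_subset_right inter_subset_right (sdiff_disj h)
  have dP : ∀ {S : Finset α}, Disjoint (C ∩ P) (C ∩ (S \ P)) :=
    fun {S} => Disjoint.mono inter_subset_right inter_subset_right disjoint_sdiff
  have hU : (C ∩ P) ∪ (C ∩ (S₁ \ P)) ∪ (C ∩ (S₂ \ P)) ∪ (C ∩ (S₃ \ P)) ∪ (C ∩ (S₄ \ P)) ⊆ C := by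
    refine union_subset (union_subset (union_subset (union_subset ?_ ?_) ?_) ?_) ?_ <;>
      exact inter_subset_left
  have hUcard := card_union5 (α := α) dP dP dP dP (dd h12) (dd h13) (dd h14) (dd h23) (dd h24)
    (dd h34)
  have hle := card_le_card hU
  rw [hUcard, hC4] at hle
  omega


private lemma card_inter_singletons {x y : Finset α} (hx : x.card = 1) (hy : y.card = 1) :
    (x ∩ y).card = if x = y then 1 else 0 := by
  split
  · next h => rw [h, inter_self, hy]
  · next h =>
    obtain ⟨u, rfl⟩ := card_eq_one.mp hx
    obtain ⟨v, rfl⟩ := card_eq_one.mp hy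
    have huv : u ≠ v := fun e => h (by rw [e])
    rw [singleton_inter_of_notMem (by simpa using huv)]
    rfl

private lemma singleton_cases {b x z : Finset α} (hb : b.card = 2)
    (hxb : x ⊆ b) (hzb : z ⊆ b) (hx : x.card = 1) (hz : z.card = 1) :
    z = x ∨ z = b \ x := by
  obtain ⟨u, rfl⟩ := card_eq_one.mp hx
  obtain ⟨v, rfl⟩ := card_eq_one.mp hz
  rcases eq_or_ne v u with h | h
  · exact Or.inl (by rw [h])
  · right
    have hv : v ∈ b := hzb (mem_singleton_self v)
    rw [eq_comm, eq_singleton_iff_unique_mem]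
    constructor
    · exact mem_sdiff.mpr ⟨hv, by simpa using h⟩
    · intro w hw
      rw [mem_sdiff, mem_singleton] at hw
      -- b has card 2, contains u, v, w with w ≠ u, v ≠ u; so w = v
      by_contra hwv
      have hu : u ∈ b := hxb (mem_singleton_self u)
      have hsub : {w, v, u} ⊆ b := by
        intro a ha
        simp only [mem_insert, mem_singleton] at ha
        rcases ha with rfl | rfl | rfl <;> [exact hw.1; exact hv; exact hu]
      have hcard : ({w, v, u} : Finset α).card = 3 := by
        rw [card_insert_of_notMem (by simp [hwv, hw.2]),
          card_insert_of_notMem (by simpa using h)]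
        rfl
      have := card_le_card hsub
      omega

private lemma singleton_trichotomy {b x y z : Finset α} (hb : b.card = 2)
    (hxb : x ⊆ b) (hyb : y ⊆ b) (hzb : z ⊆ b)
    (hx : x.card = 1) (hy : y.card = 1) (hz : z.card = 1) :
    x = y ↔ ((x = z) ↔ (y = z)) := by
  constructor
  · rintro rfl; rfl
  · intro h
    rcases singleton_cases hb hzb hxb hz hx with h1 | h1 <;>
      rcases singleton_cases hb hzb hyb hz hy with h2 | h2
    · exact h1.trans h2.symm
    · exact h1.trans (h.mp h1).symm
    · exact (h.mpr h2).trans h2.symm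
    · exact h1.trans h2.symm

private lemma biUnion_four (g : Fin 4 → Finset α) :
    (univ : Finset (Fin 4)).biUnion g = g 0 ∪ g 1 ∪ g 2 ∪ g 3 := by
  ext a
  simp only [mem_biUnion, mem_univ, true_and, mem_union]
  constructor
  · rintro ⟨k, hk⟩
    fin_cases k <;> tauto
  · rintro (((h | h) | h) | h)
    exacts [⟨0, h⟩, ⟨1, h⟩, ⟨2, h⟩, ⟨3, h⟩]

private lemma count_agree (f : Fin 4 → Finset α) (C C' : Finset α)
    (hdisj : ∀ k l, k ≠ l → Disjoint (f k) (f l))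
    (hC : C = (univ : Finset (Fin 4)).biUnion fun k => C ∩ f k)
    (hc : ∀ k, (C ∩ f k).card = 1) (hc' : ∀ k, (C' ∩ f k).card = 1)
    (hcc : (C ∩ C').card = 2) :
    ((univ : Finset (Fin 4)).filter fun k => C ∩ f k ≠ C' ∩ f k).card = 2 := by
  have piece : ∀ k, (C ∩ f k) ∩ C' = (C ∩ f k) ∩ (C' ∩ f k) := by
    intro k; ext a; simp only [mem_inter]; tauto
  have key : C ∩ C' = (univ : Finset (Fin 4)).biUnion fun k => (C ∩ f k) ∩ (C' ∩ f k) := by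
    ext a
    constructor
    · intro ha
      have haC : a ∈ C := (mem_inter.mp ha).1
      have haC' : a ∈ C' := (mem_inter.mp ha).2
      rw [hC] at haC
      obtain ⟨k, _, hk⟩ := mem_biUnion.mp haC
      exact mem_biUnion.mpr ⟨k, mem_univ k, by rw [← piece k]; exact mem_inter.mpr ⟨hk, haC'⟩⟩
    · intro ha
      obtain ⟨k, _, hk⟩ := mem_biUnion.mp ha
      rw [← piece k] at hk
      exact mem_inter.mpr ⟨(mem_inter.mp (mem_inter.mp hk).1).1, (mem_inter.mp hk).2⟩
  have hsum : ∑ k : Fin 4, ((C ∩ f k) ∩ (C' ∩ f k)).card = 2 := by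
    rw [← card_biUnion, ← key, hcc]
    intro k _ l hl hkl
    exact Disjoint.mono (inter_subset_left.trans inter_subset_right)
      (inter_subset_left.trans inter_subset_right) (hdisj k l hkl)
  have hsum2 : ∑ k : Fin 4, (if C ∩ f k = C' ∩ f k then 1 else 0) = 2 := by
    rw [← hsum]
    exact Finset.sum_congr rfl fun k _ => (card_inter_singletons (hc k) (hc' k)).symm
  have h4 : ((univ : Finset (Fin 4)).filter fun k => C ∩ f k = C' ∩ f k).card
      + ((univ : Finset (Fin 4)).filter fun k => ¬ (C ∩ f k = C' ∩ f k)).card = 4 := by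
    rw [card_filter_add_card_filter_not]
    simp
  have heq : ((univ : Finset (Fin 4)).filter fun k => C ∩ f k = C' ∩ f k).card = 2 := by
    rw [card_filter]; exact hsum2
  simp only [ne_eq]
  omega

private lemma E_symmDiff (f : Fin 4 → Finset α) (C C' C₀ : Finset α)
    (hb : ∀ k, (f k).card = 2)
    (hc : ∀ k, (C ∩ f k).card = 1) (hc' : ∀ k, (C' ∩ f k).card = 1)
    (hc0 : ∀ k, (C₀ ∩ f k).card = 1) :
    symmDiff ((univ : Finset (Fin 4)).filter fun k => C ∩ f k ≠ C₀ ∩ f k)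
      ((univ : Finset (Fin 4)).filter fun k => C' ∩ f k ≠ C₀ ∩ f k)
      = (univ : Finset (Fin 4)).filter fun k => C ∩ f k ≠ C' ∩ f k := by
  ext k
  simp only [mem_symmDiff, mem_filter, mem_univ, true_and]
  have htri := singleton_trichotomy (x := C ∩ f k) (y := C' ∩ f k) (z := C₀ ∩ f k)
    (hb k) inter_subset_right inter_subset_right inter_subset_right
    (hc k) (hc' k) (hc0 k)
  tauto

set_option maxHeartbeats 2000000 in
private theorem no_four_sym : ∀ e₁ e₂ e₃ e₄ : Finset (Fin 4),
    e₁.card = 2 → e₂.card = 2 → e₃.card = 2 → e₄.card = 2 →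
    (symmDiff e₁ e₂).card = 2 → (symmDiff e₁ e₃).card = 2 → (symmDiff e₁ e₄).card = 2 →
    (symmDiff e₂ e₃).card = 2 → (symmDiff e₂ e₄).card = 2 → (symmDiff e₃ e₄).card = 2 →
    False := by
  decide

private lemma sunflower_lemma (F : Finset (Finset α))
    (h4 : ∀ A ∈ F, A.card = 4)
    (h2 : ∀ A ∈ F, ∀ B ∈ F, A ≠ B → (A ∩ B).card = 2)
    (hm : 8 ≤ F.card) :
    ∃ P : Finset α, P.card = 2 ∧ ∀ A ∈ F, P ⊆ A := by
  obtain ⟨A, hA⟩ : F.Nonempty := card_pos.mp (by omega)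
  have hmap : ∀ B ∈ F.erase A, A ∩ B ∈ powersetCard 2 A := by
    intro B hB
    rw [mem_powersetCard]
    exact ⟨inter_subset_left,
      h2 A hA B (mem_of_mem_erase hB) (ne_of_mem_erase hB).symm⟩
  have hchoose : Nat.choose 4 2 = 6 := rfl
  have hcard_lt : (powersetCard 2 A).card < (F.erase A).card := by
    rw [card_powersetCard, h4 A hA, card_erase_of_mem hA, hchoose]
    omega
  obtain ⟨B₁, hB₁, B₂, hB₂, hB12, hPe⟩ := exists_ne_map_eq_of_card_lt_of_maps_to hcard_lt hmap
  have hB₁F := mem_of_mem_erase hB₁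
  have hB₂F := mem_of_mem_erase hB₂
  have hAB₁ : A ≠ B₁ := (ne_of_mem_erase hB₁).symm
  have hAB₂ : A ≠ B₂ := (ne_of_mem_erase hB₂).symm
  set P := A ∩ B₁ with hPdef
  have hP2 : P.card = 2 := h2 A hA B₁ hB₁F hAB₁
  have hPA : P ⊆ A := inter_subset_left
  have hPB₁ : P ⊆ B₁ := inter_subset_right
  have hPB₂ : P ⊆ B₂ := hPe ▸ inter_subset_right
  have interP : ∀ X ∈ F, ∀ Y ∈ F, X ≠ Y → P ⊆ X → P ⊆ Y → X ∩ Y = P := by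
    intro X hX Y hY hXY hPX hPY
    exact (eq_of_subset_of_card_le (s := P) (t := X ∩ Y) (subset_inter hPX hPY)
      (by rw [h2 X hX Y hY hXY, hP2])).symm
  have hAB₁P : A ∩ B₁ = P := rfl
  have hAB₂P : A ∩ B₂ = P := hPe.symm
  have hB₁B₂P : B₁ ∩ B₂ = P := interP _ hB₁F _ hB₂F hB12 hPB₁ hPB₂
  by_cases hall : ∀ C ∈ F, P ⊆ C
  · exact ⟨P, hP2, hall⟩
  exfalso
  push_neg at hall
  set SS := F.filter (fun X => P ⊆ X) with hSSdef
  have hASS : A ∈ SS := mem_filter.mpr ⟨hA, hPA⟩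
  have hB₁SS : B₁ ∈ SS := mem_filter.mpr ⟨hB₁F, hPB₁⟩
  have hB₂SS : B₂ ∈ SS := mem_filter.mpr ⟨hB₂F, hPB₂⟩
  by_cases h4S : 4 ≤ SS.card
  · -- a fourth set through P exists, so every set contains P: contradiction with hall
    have hnotsub : ¬ SS ⊆ {A, B₁, B₂} := by
      intro hs
      have hle := card_le_card hs
      have h3 : ({A, B₁, B₂} : Finset (Finset α)).card ≤ 3 := by
        apply (card_insert_le _ _).trans
        apply Nat.succ_le_succ
        apply (card_insert_le _ _).trans
        simp
      omega
    rw [not_subset] at hnotsub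
    obtain ⟨S₄, hS₄SS, hS₄nm⟩ := hnotsub
    simp only [mem_insert, mem_singleton, not_or] at hS₄nm
    obtain ⟨hS₄A, hS₄B₁, hS₄B₂⟩ := hS₄nm
    have hS₄F : S₄ ∈ F := (mem_filter.mp hS₄SS).1
    have hPS₄ : P ⊆ S₄ := (mem_filter.mp hS₄SS).2
    obtain ⟨C, hCF, hPC⟩ := hall
    have hne : ∀ {X : Finset α}, P ⊆ X → C ≠ X := fun hPX e => hPC (e ▸ hPX)
    exact no_bad_four hP2 (h4 C hCF) hPA hPB₁ hPB₂ hPS₄ hAB₁P hAB₂P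
      (interP _ hA _ hS₄F (Ne.symm hS₄A) hPA hPS₄) hB₁B₂P
      (interP _ hB₁F _ hS₄F (Ne.symm hS₄B₁) hPB₁ hPS₄)
      (interP _ hB₂F _ hS₄F (Ne.symm hS₄B₂) hPB₂ hPS₄)
      (h2 C hCF A hA (hne hPA)) (h2 C hCF B₁ hB₁F (hne hPB₁))
      (h2 C hCF B₂ hB₂F (hne hPB₂)) (h2 C hCF S₄ hS₄F (hne hPS₄)) hPC
  · -- at most 3 sets through P; at least 5 sets avoid P
    push_neg at h4S
    set T := F.filter (fun X => ¬ P ⊆ X) with hTdef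
    have hTcard : 5 ≤ T.card := by
      have := card_filter_add_card_filter_not (s := F) (p := fun X => P ⊆ X)
      rw [← hSSdef] at this
      rw [hTdef]
      omega
    -- peel off five elements of T
    obtain ⟨C₀, hC₀⟩ := card_pos.mp (show 0 < T.card by omega)
    have ht1 : 0 < (T.erase C₀).card := by rw [card_erase_of_mem hC₀]; omega
    obtain ⟨C₁, hC₁⟩ := card_pos.mp ht1
    have ht2 : 0 < ((T.erase C₀).erase C₁).card := by
      rw [card_erase_of_mem hC₁, card_erase_of_mem hC₀]; omega
    obtain ⟨C₂, hC₂⟩ := card_pos.mp ht2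
    have ht3 : 0 < (((T.erase C₀).erase C₁).erase C₂).card := by
      rw [card_erase_of_mem hC₂, card_erase_of_mem hC₁, card_erase_of_mem hC₀]; omega
    obtain ⟨C₃, hC₃⟩ := card_pos.mp ht3
    have ht4 : 0 < ((((T.erase C₀).erase C₁).erase C₂).erase C₃).card := by
      rw [card_erase_of_mem hC₃, card_erase_of_mem hC₂, card_erase_of_mem hC₁,
        card_erase_of_mem hC₀]; omega
    obtain ⟨C₄, hC₄⟩ := card_pos.mp ht4
    -- memberships and distinctness
    have hC₁T : C₁ ∈ T := mem_of_mem_erase hC₁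
    have hC₂T : C₂ ∈ T := mem_of_mem_erase (mem_of_mem_erase hC₂)
    have hC₃T : C₃ ∈ T := mem_of_mem_erase (mem_of_mem_erase (mem_of_mem_erase hC₃))
    have hC₄T : C₄ ∈ T :=
      mem_of_mem_erase (mem_of_mem_erase (mem_of_mem_erase (mem_of_mem_erase hC₄)))
    have h10 : C₁ ≠ C₀ := ne_of_mem_erase hC₁
    have h21 : C₂ ≠ C₁ := ne_of_mem_erase hC₂
    have h20 : C₂ ≠ C₀ := ne_of_mem_erase (mem_of_mem_erase hC₂)
    have h32 : C₃ ≠ C₂ := ne_of_mem_erase hC₃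
    have h31 : C₃ ≠ C₁ := ne_of_mem_erase (mem_of_mem_erase hC₃)
    have h30 : C₃ ≠ C₀ := ne_of_mem_erase (mem_of_mem_erase (mem_of_mem_erase hC₃))
    have h43 : C₄ ≠ C₃ := ne_of_mem_erase hC₄
    have h42 : C₄ ≠ C₂ := ne_of_mem_erase (mem_of_mem_erase hC₄)
    have h41 : C₄ ≠ C₁ := ne_of_mem_erase (mem_of_mem_erase (mem_of_mem_erase hC₄))
    have h40 : C₄ ≠ C₀ :=
      ne_of_mem_erase (mem_of_mem_erase (mem_of_mem_erase (mem_of_mem_erase hC₄)))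
    have hTmem : ∀ {C : Finset α}, C ∈ T → C ∈ F ∧ ¬ P ⊆ C := fun h => mem_filter.mp h
    obtain ⟨hC₀F, hC₀P⟩ := hTmem hC₀
    obtain ⟨hC₁F, hC₁P⟩ := hTmem hC₁T
    obtain ⟨hC₂F, hC₂P⟩ := hTmem hC₂T
    obtain ⟨hC₃F, hC₃P⟩ := hTmem hC₃T
    obtain ⟨hC₄F, hC₄P⟩ := hTmem hC₄T
    -- structure of each bad set
    have hne : ∀ {C X : Finset α}, ¬ P ⊆ C → P ⊆ X → C ≠ X := fun hPC hPX e => hPC (e ▸ hPX)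
    have hstruct : ∀ {C : Finset α}, C ∈ F → ¬ P ⊆ C →
        (C ∩ P).card = 1 ∧ (C ∩ (A \ P)).card = 1 ∧ (C ∩ (B₁ \ P)).card = 1 ∧
          (C ∩ (B₂ \ P)).card = 1 ∧
          C = (C ∩ P) ∪ (C ∩ (A \ P)) ∪ (C ∩ (B₁ \ P)) ∪ (C ∩ (B₂ \ P)) := by
      intro C hCF hPC
      exact structC hP2 (h4 C hCF) hPA hPB₁ hPB₂ hAB₁P hAB₂P hB₁B₂P
        (h2 C hCF A hA (hne hPC hPA)) (h2 C hCF B₁ hB₁F (hne hPC hPB₁))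
        (h2 C hCF B₂ hB₂F (hne hPC hPB₂)) hPC
    -- the four blocks
    set f : Fin 4 → Finset α := ![P, A \ P, B₁ \ P, B₂ \ P] with hfdef
    have hf0 : f 0 = P := rfl
    have hf1 : f 1 = A \ P := rfl
    have hf2 : f 2 = B₁ \ P := rfl
    have hf3 : f 3 = B₂ \ P := rfl
    have hfcard : ∀ k, (f k).card = 2 := by
      intro k
      fin_cases k
      · exact hP2
      · show (A \ P).card = 2
        rw [card_sdiff_of_subset hPA, h4 A hA, hP2]
      · show (B₁ \ P).card = 2
        rw [card_sdiff_of_subset hPB₁, h4 B₁ hB₁F, hP2]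
      · show (B₂ \ P).card = 2
        rw [card_sdiff_of_subset hPB₂, h4 B₂ hB₂F, hP2]
    have hfdisj : ∀ k l : Fin 4, k ≠ l → Disjoint (f k) (f l) := by
      have d01 : Disjoint P (A \ P) := disjoint_sdiff
      have d02 : Disjoint P (B₁ \ P) := disjoint_sdiff
      have d03 : Disjoint P (B₂ \ P) := disjoint_sdiff
      have d12 : Disjoint (A \ P) (B₁ \ P) := sdiff_disj hAB₁P
      have d13 : Disjoint (A \ P) (B₂ \ P) := sdiff_disj hAB₂P
      have d23 : Disjoint (B₁ \ P) (B₂ \ P) := sdiff_disj hB₁B₂P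
      intro k l hkl
      fin_cases k <;> fin_cases l <;>
        first
          | exact absurd rfl hkl
          | assumption
          | exact d01.symm
          | exact d02.symm
          | exact d03.symm
          | exact d12.symm
          | exact d13.symm
          | exact d23.symm
    have hcparts : ∀ {C : Finset α}, C ∈ F → ¬ P ⊆ C → ∀ k, (C ∩ f k).card = 1 := by
      intro C hCF hPC k
      obtain ⟨p0, p1, p2, p3, _⟩ := hstruct hCF hPC
      fin_cases k
      · exact p0
      · exact p1
      · exact p2
      · exact p3
    have hcdecomp : ∀ {C : Finset α}, C ∈ F → ¬ P ⊆ C →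
        C = (univ : Finset (Fin 4)).biUnion fun k => C ∩ f k := by
      intro C hCF hPC
      obtain ⟨_, _, _, _, hU⟩ := hstruct hCF hPC
      rw [biUnion_four]
      show C = (C ∩ P) ∪ (C ∩ (A \ P)) ∪ (C ∩ (B₁ \ P)) ∪ (C ∩ (B₂ \ P))
      exact hU
    -- the difference patterns
    have hcc : ∀ {X Y : Finset α}, X ∈ F → Y ∈ F → X ≠ Y → (X ∩ Y).card = 2 := by
      intro X Y hX hY hXY; exact h2 X hX Y hY hXY
    have cE : ∀ {X Y : Finset α}, X ∈ F → ¬ P ⊆ X → Y ∈ F → ¬ P ⊆ Y → X ≠ Y →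
        ((univ : Finset (Fin 4)).filter fun k => X ∩ f k ≠ Y ∩ f k).card = 2 := by
      intro X Y hXF hXP hYF hYP hXY
      exact count_agree f X Y hfdisj (hcdecomp hXF hXP) (hcparts hXF hXP)
        (hcparts hYF hYP) (hcc hXF hYF hXY)
    have sE : ∀ {X Y : Finset α}, X ∈ F → ¬ P ⊆ X → Y ∈ F → ¬ P ⊆ Y → X ≠ Y →
        (symmDiff ((univ : Finset (Fin 4)).filter fun k => X ∩ f k ≠ C₀ ∩ f k)
          ((univ : Finset (Fin 4)).filter fun k => Y ∩ f k ≠ C₀ ∩ f k)).card = 2 := by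
      intro X Y hXF hXP hYF hYP hXY
      rw [E_symmDiff f X Y C₀ hfcard (hcparts hXF hXP) (hcparts hYF hYP)
        (hcparts hC₀F hC₀P)]
      exact cE hXF hXP hYF hYP hXY
    exact no_four_sym _ _ _ _
      (cE hC₁F hC₁P hC₀F hC₀P h10) (cE hC₂F hC₂P hC₀F hC₀P h20)
      (cE hC₃F hC₃P hC₀F hC₀P h30) (cE hC₄F hC₄P hC₀F hC₀P h40)
      (sE hC₁F hC₁P hC₂F hC₂P h21.symm) (sE hC₁F hC₁P hC₃F hC₃P h31.symm)
      (sE hC₁F hC₁P hC₄F hC₄P h41.symm) (sE hC₂F hC₂P hC₃F hC₃P h32.symm)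
      (sE hC₂F hC₂P hC₄F hC₄P h42.symm) (sE hC₃F hC₃P hC₄F hC₄P h43.symm)


end EquidistFour

/-- For `n ≥ 16`, an equidistant binary code of length `n` with distance 4
(all pairwise distances between distinct words equal 4) has cardinality at
most `n/2`. -/
theorem equidistant_dist_four_card_le (n : ℕ) (hn : 16 ≤ n)
    (D : Finset (Fin n → Fin 2))
    (hdist : ∀ x ∈ D, ∀ y ∈ D, x ≠ y → hammingDist x y = 4) :
    D.card ≤ n / 2 := by
  classical
  by_cases hD : D.card ≤ 8
  · omega
  push_neg at hD
  obtain ⟨c, hc⟩ : D.Nonempty := Finset.card_pos.mp (by omega)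
  set supp : (Fin n → Fin 2) → Finset (Fin n) :=
    fun x => Finset.univ.filter (fun i => x i ≠ c i) with hsuppdef
  have hmemsupp : ∀ x i, i ∈ supp x ↔ x i ≠ c i := by
    intro x i; simp [hsuppdef]
  have hinj : Function.Injective supp := by
    intro x y hxy
    funext i
    have hxi : (x i ≠ c i) ↔ (y i ≠ c i) := by
      rw [← hmemsupp, ← hmemsupp, hxy]
    have key : ∀ a b d : Fin 2, ((a ≠ d) ↔ (b ≠ d)) → a = b := by decide
    exact key _ _ _ hxi
  have hdist_eq : ∀ x y : Fin n → Fin 2,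
      hammingDist x y = (Finset.univ.filter (fun i => x i ≠ y i)).card := fun _ _ => rfl
  have hsupp4 : ∀ x ∈ D.erase c, (supp x).card = 4 := by
    intro x hx
    have h := hdist x (Finset.mem_of_mem_erase hx) c hc (Finset.ne_of_mem_erase hx)
    rw [hdist_eq] at h
    exact h
  have hsuppint : ∀ x ∈ D.erase c, ∀ y ∈ D.erase c, x ≠ y →
      (supp x ∩ supp y).card = 2 := by
    intro x hx y hy hxy
    have hset : Finset.univ.filter (fun i => x i ≠ y i)
        = (supp x ∪ supp y) \ (supp x ∩ supp y) := by
      ext i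
      simp only [Finset.mem_filter, Finset.mem_univ, true_and, Finset.mem_sdiff,
        Finset.mem_union, Finset.mem_inter, hmemsupp]
      have key : ∀ a b d : Fin 2,
          (a ≠ b) ↔ ((a ≠ d ∨ b ≠ d) ∧ ¬(a ≠ d ∧ b ≠ d)) := by decide
      exact key (x i) (y i) (c i)
    have h4 := hdist x (Finset.mem_of_mem_erase hx) y (Finset.mem_of_mem_erase hy) hxy
    rw [hdist_eq, hset, Finset.card_sdiff_of_subset (Finset.inter_subset_union)] at h4
    have hui := Finset.card_union_add_card_inter (supp x) (supp y)
    rw [hsupp4 x hx, hsupp4 y hy] at hui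
    have hle := Finset.card_le_card (Finset.inter_subset_union (s := supp x) (t := supp y))
    omega
  set F := (D.erase c).image supp with hFdef
  have hF4 : ∀ A ∈ F, A.card = 4 := by
    intro A hA
    obtain ⟨x, hx, rfl⟩ := Finset.mem_image.mp hA
    exact hsupp4 x hx
  have hF2 : ∀ A ∈ F, ∀ B ∈ F, A ≠ B → (A ∩ B).card = 2 := by
    intro A hA B hB hAB
    obtain ⟨x, hx, rfl⟩ := Finset.mem_image.mp hA
    obtain ⟨y, hy, rfl⟩ := Finset.mem_image.mp hB
    exact hsuppint x hx y hy (fun e => hAB (by rw [e]))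
  have hFcard : F.card = D.card - 1 := by
    rw [hFdef, Finset.card_image_of_injective _ hinj, Finset.card_erase_of_mem hc]
  obtain ⟨P, hP2, hPsub⟩ := EquidistFour.sunflower_lemma F hF4 hF2 (by omega)
  have hdisjp : ∀ A ∈ F, ∀ B ∈ F, A ≠ B → Disjoint (A \ P) (B \ P) := by
    intro A hA B hB hAB
    apply EquidistFour.sdiff_disj
    exact (Finset.eq_of_subset_of_card_le (s := P) (t := A ∩ B)
      (Finset.subset_inter (hPsub A hA) (hPsub B hB))
      (by rw [hF2 A hA B hB hAB, hP2])).symm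
  have hsum : ∑ A ∈ F, (A \ P).card = 2 * F.card := by
    rw [Finset.sum_congr rfl (fun A hA => by
      rw [Finset.card_sdiff_of_subset (hPsub A hA), hF4 A hA, hP2])]
    rw [Finset.sum_const, smul_eq_mul]
    ring
  have hbiU : (F.biUnion fun A => A \ P).card = 2 * F.card := by
    rw [Finset.card_biUnion hdisjp]
    exact hsum
  have hsubU : (F.biUnion fun A => A \ P) ⊆ Finset.univ \ P := by
    intro a ha
    obtain ⟨A, hA, haA⟩ := Finset.mem_biUnion.mp ha
    exact Finset.mem_sdiff.mpr ⟨Finset.mem_univ _, (Finset.mem_sdiff.mp haA).2⟩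
  have hbound := Finset.card_le_card hsubU
  rw [hbiU, Finset.card_sdiff_of_subset (Finset.subset_univ P), Finset.card_univ, Fintype.card_fin,
    hP2] at hbound
  omega
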